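/- Let G be a finite group generated by two elements a, b, each of order 3, with ⟨a⟩ ∩ ⟨b⟩ = {1}, and let H = 3-Cay(G,{a,b}). Then the dual hypergraph H* is (the edge-set of) a 3-regular bipartite simple graph on (2/3)|G| vertices (its vertices being the left cosets of ⟨a⟩ and of ⟨b⟩ in G, two cosets adjacent if and only if they intersect, with bipartition classes the ⟨a⟩-cosets and the ⟨b⟩-cosets), and the girth of this graph equals the girth of H. -/

import Mathlib

/-!
Every `g ∈ G` lies in exactly two hyperedges of `H`, namely `g⟨a⟩` and `g⟨b⟩`, and since
`⟨a⟩ ∩ ⟨b⟩ = 1` it is determined by them: `H` is a linear hypergraph in which every vertex has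
degree two, so its dual is a simple graph whose edges are the elements of `G`. For such a
hypergraph a Berge cycle `(vᵢ, eᵢ)` is the same thing as a cycle `e₀, …, e_{ℓ-1}` of the dual:
linearity rules out Berge cycles of length two, and degree two makes the common vertices of
consecutive hyperedges of a cycle pairwise distinct. Hence the girths agree. A coset `g⟨a⟩` meets
exactly three cosets of `⟨b⟩`, one through each of its elements, and Lagrange's theorem counts
the vertices.
-/

/-- A Berge cycle of length `ℓ` in the hypergraph with incidence relation `inc`:
distinct vertices `v i` and distinct hyperedges `e i` (indexed by `ZMod ℓ`)
such that `e i` contains both `v i` and `v (i+1)`. -/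
def BergeCycle {V E : Type*} (inc : V → E → Prop) (ℓ : ℕ) : Prop :=
  ∃ (v : ZMod ℓ → V) (e : ZMod ℓ → E),
    Function.Injective v ∧ Function.Injective e ∧
      ∀ i : ZMod ℓ, inc (v i) (e i) ∧ inc (v (i + 1)) (e i)

/-- The girth (in `ℕ∞`) of a hypergraph: the length of a shortest Berge cycle. -/
noncomputable def hypergraphGirth {V E : Type*} (inc : V → E → Prop) : ℕ∞ :=
  sInf {n : ℕ∞ | ∃ ℓ : ℕ, n = ℓ ∧ 2 ≤ ℓ ∧ BergeCycle inc ℓ}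

/-- The incidence relation of the Cayley hypergraph `3-Cay(G,{a,b})` (for `a`, `b`
of order 3): vertices are the elements of `G`, hyperedges are the left cosets of
`⟨a⟩` and of `⟨b⟩`, and `g` is incident with a coset iff it lies in it. -/
def cayInc (G : Type*) [Group G] (a b : G) :
    G → (G ⧸ Subgroup.zpowers a) ⊕ (G ⧸ Subgroup.zpowers b) → Prop :=
  fun g e =>
    match e with
    | Sum.inl p => (g : G ⧸ Subgroup.zpowers a) = p
    | Sum.inr q => (g : G ⧸ Subgroup.zpowers b) = q

/-- The dual hypergraph of `3-Cay(G,{a,b})`, viewed as a simple graph: vertices are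
the left cosets of `⟨a⟩` and of `⟨b⟩`, and two cosets (from different classes) are
adjacent iff they intersect. -/
def dualCayleyGraph (G : Type*) [Group G] (a b : G) :
    SimpleGraph ((G ⧸ Subgroup.zpowers a) ⊕ (G ⧸ Subgroup.zpowers b)) where
  Adj x y := (∃ g : G, cayInc G a b g x ∧ cayInc G a b g y) ∧ x.isLeft ≠ y.isLeft
  symm := by
    refine ⟨?_⟩
    rintro x y ⟨⟨g, h1, h2⟩, hne⟩
    exact ⟨⟨g, h2, h1⟩, hne.symm⟩
  loopless := by
    refine ⟨?_⟩
    rintro x ⟨-, hne⟩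
    exact hne rfl

open Function Subgroup SimpleGraph

namespace SimpleGraph

variable {V : Type*} {G : SimpleGraph V}

theorem exists_isCycle_length_iff_exists_zmod {n : ℕ} :
    (∃ (v : V) (p : G.Walk v v), p.IsCycle ∧ p.length = n + 3) ↔
      ∃ f : ZMod (n + 3) → V, Injective f ∧ ∀ i, G.Adj (f i) (f (i + 1)) := by
  rw [← cycleGraph_isContained_iff (by omega)]
  -- `ZMod (n + 3)` is `Fin (n + 3)` by definition, the vertex type of `cycleGraph (n + 3)`.
  change _ ↔ ∃ f : Fin (n + 3) → V, Injective f ∧ ∀ i, G.Adj (f i) (f (i + 1))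
  constructor
  · rintro ⟨c⟩
    exact ⟨c, c.injective, fun i => c.toHom.map_adj (by simp [cycleGraph_adj])⟩
  · rintro ⟨f, hf, hadj⟩
    refine ⟨⟨⟨f, fun {u v} h => ?_⟩, hf⟩⟩
    rcases cycleGraph_adj.mp h with h | h
    · rw [sub_eq_iff_eq_add'.mp h]
      exact (hadj v).symm
    · rw [sub_eq_iff_eq_add'.mp h]
      exact hadj u

end SimpleGraph

section DualGraph

variable {V E : Type*}

def dualGraph (inc : V → E → Prop) : SimpleGraph E where
  Adj x y := x ≠ y ∧ ∃ v, inc v x ∧ inc v y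
  symm := ⟨fun _ _ ⟨hne, v, hx, hy⟩ => ⟨hne.symm, v, hy, hx⟩⟩
  loopless := ⟨fun _ h => h.1 rfl⟩

def MaxDegreeLeTwo (inc : V → E → Prop) : Prop :=
  ∀ v x y z, inc v x → inc v y → inc v z → x = y ∨ x = z ∨ y = z

def IsLinearHypergraph (inc : V → E → Prop) : Prop :=
  ∀ v w x y, inc v x → inc v y → inc w x → inc w y → v = w ∨ x = y

variable {inc : V → E → Prop}

theorem IsLinearHypergraph.not_bergeCycle_two (hlin : IsLinearHypergraph inc) :
    ¬ BergeCycle inc 2 := by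
  rintro ⟨v, e, hv, he, hinc⟩
  have h01 : (0 : ZMod 2) ≠ 1 := by decide
  rcases hlin (v 0) (v 1) (e 0) (e 1) (hinc 0).1 (hinc 1).2 (hinc 0).2 (hinc 1).1 with h | h
  · exact h01 (hv h)
  · exact h01 (he h)

theorem MaxDegreeLeTwo.bergeCycle_iff_exists_isCycle (hdeg : MaxDegreeLeTwo inc) {n : ℕ} :
    BergeCycle inc (n + 3) ↔
      ∃ (x : E) (p : (dualGraph inc).Walk x x), p.IsCycle ∧ p.length = n + 3 := by
  have : Fact (1 < n + 3) := ⟨by omega⟩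
  have h2 : (2 : ZMod (n + 3)) ≠ 0 := fun h => by
    have := congrArg ZMod.val h
    rw [ZMod.val_ofNat, Nat.mod_eq_of_lt (by omega)] at this
    simp at this
  rw [exists_isCycle_length_iff_exists_zmod]
  constructor
  · rintro ⟨v, e, -, he, hinc⟩
    exact ⟨e, he, fun i => ⟨he.ne (by simp), v (i + 1), (hinc i).2, (hinc (i + 1)).1⟩⟩
  · rintro ⟨e, he, hadj⟩
    choose w hw using fun i => (hadj i).2
    -- `w i` lies on `e i`, `e (i + 1)`, `e j` and `e (j + 1)`; if `i ≠ j`, degree two forces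
    -- `j = i + 1` and `i = j + 1`, i.e. `2 = 0`.
    have hw_inj : Injective w := by
      intro i j hij
      rcases hdeg (w i) (e i) (e (i + 1)) (e j) (hw i).1 (hw i).2 (hij ▸ (hw j).1) with
        h | h | h
      · exact absurd h (hadj i).1
      · exact he h
      rcases hdeg (w i) (e i) (e (i + 1)) (e (j + 1)) (hw i).1 (hw i).2 (hij ▸ (hw j).2) with
        h' | h' | h'
      · exact absurd h' (hadj i).1
      · exact (h2 (by linear_combination he h - he h')).elim
      · exact add_right_cancel (he h')
    refine ⟨fun i => w (i - 1), e, hw_inj.comp sub_left_injective, he, fun i => ⟨?_, ?_⟩⟩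
    · simpa using (hw (i - 1)).2
    · simpa using (hw i).1

theorem egirth_dualGraph (hdeg : MaxDegreeLeTwo inc) (hlin : IsLinearHypergraph inc) :
    (dualGraph inc).egirth = hypergraphGirth inc := by
  refine le_antisymm (le_sInf ?_) (le_egirth.2 fun x p hp => sInf_le ?_)
  · rintro _ ⟨ℓ, rfl, hℓ, hB⟩
    obtain ⟨n, rfl⟩ : ∃ n, ℓ = n + 3 := by
      obtain rfl | hℓ := hℓ.eq_or_lt
      · exact absurd hB hlin.not_bergeCycle_two
      · exact ⟨ℓ - 3, by omega⟩
    obtain ⟨x, p, hp, hlen⟩ := hdeg.bergeCycle_iff_exists_isCycle.1 hB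
    exact hlen ▸ egirth_le_length hp
  · obtain ⟨n, hn⟩ : ∃ n, p.length = n + 3 :=
      ⟨p.length - 3, by have := hp.three_le_length; omega⟩
    exact ⟨p.length, rfl, by omega, hn ▸ hdeg.bergeCycle_iff_exists_isCycle.2 ⟨x, p, hp, hn⟩⟩

end DualGraph

namespace QuotientGroup

variable {G : Type*} [Group G] {A B : Subgroup G}

theorem eq_of_mk_eq_of_mk_eq (hAB : A ⊓ B = ⊥) {g h : G} (hA : (g : G ⧸ A) = h)
    (hB : (g : G ⧸ B) = h) : g = h := by
  have : g⁻¹ * h ∈ A ⊓ B := ⟨QuotientGroup.eq.1 hA, QuotientGroup.eq.1 hB⟩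
  rwa [hAB, mem_bot, inv_mul_eq_one] at this

theorem ncard_image_mk_preimage_mk_singleton (hAB : A ⊓ B = ⊥) (p : G ⧸ A) :
    ((mk : G → G ⧸ B) '' (mk ⁻¹' {p})).ncard = Nat.card A := by
  rw [Set.InjOn.ncard_image, ← Nat.card_coe_set_eq,
    Nat.card_congr (preimageMkEquivSubgroupProdSet A {p}), Nat.card_prod, Nat.card_coe_set_eq,
    Set.ncard_singleton, mul_one]
  intro g hg h hh
  exact eq_of_mk_eq_of_mk_eq hAB (hg.trans hh.symm)

end QuotientGroup

section Cayley

variable {G : Type*} [Group G] {a b : G}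

theorem cayInc_iff {g : G} {x : (G ⧸ zpowers a) ⊕ (G ⧸ zpowers b)} :
    cayInc G a b g x ↔ x = .inl g ∨ x = .inr g := by
  cases x <;> simp [cayInc, eq_comm]

theorem maxDegreeLeTwo_cayInc : MaxDegreeLeTwo (cayInc G a b) := by
  intro g x y z
  simp only [cayInc_iff]
  rintro (rfl | rfl) (rfl | rfl) (rfl | rfl) <;> simp

theorem isLinearHypergraph_cayInc (hint : zpowers a ⊓ zpowers b = ⊥) :
    IsLinearHypergraph (cayInc G a b) := by
  intro g h x y
  simp only [cayInc_iff]
  rintro (rfl | rfl) (rfl | rfl) hx hy <;>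
    simp only [Sum.inl.injEq, Sum.inr.injEq, reduceCtorEq, or_false, false_or] at hx hy
  · exact .inr rfl
  · exact .inl (QuotientGroup.eq_of_mk_eq_of_mk_eq hint hx hy)
  · exact .inl (QuotientGroup.eq_of_mk_eq_of_mk_eq hint hy hx)
  · exact .inr rfl

theorem dualCayleyGraph_eq_dualGraph : dualCayleyGraph G a b = dualGraph (cayInc G a b) := by
  ext x y
  refine ⟨fun ⟨hg, hside⟩ => ⟨fun h => hside (congrArg _ h), hg⟩,
    fun ⟨hne, g, hx, hy⟩ => ⟨⟨g, hx, hy⟩, ?_⟩⟩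
  rw [cayInc_iff] at hx hy
  rcases hx with rfl | rfl <;> rcases hy with rfl | rfl <;> simp_all

theorem card_neighborSet_dualCayleyGraph_inl (hint : zpowers a ⊓ zpowers b = ⊥)
    (p : G ⧸ zpowers a) :
    Nat.card ((dualCayleyGraph G a b).neighborSet (.inl p)) = orderOf a := by
  have hnbr : (dualCayleyGraph G a b).neighborSet (.inl p) =
      .inr '' (QuotientGroup.mk '' (QuotientGroup.mk ⁻¹' {p})) := by
    ext (_ | _) <;> simp [dualCayleyGraph, cayInc]
  rw [Nat.card_coe_set_eq, hnbr, Set.ncard_image_of_injective _ Sum.inr_injective,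
    QuotientGroup.ncard_image_mk_preimage_mk_singleton hint, Nat.card_zpowers]

theorem card_neighborSet_dualCayleyGraph_inr (hint : zpowers a ⊓ zpowers b = ⊥)
    (q : G ⧸ zpowers b) :
    Nat.card ((dualCayleyGraph G a b).neighborSet (.inr q)) = orderOf b := by
  have hnbr : (dualCayleyGraph G a b).neighborSet (.inr q) =
      .inl '' (QuotientGroup.mk '' (QuotientGroup.mk ⁻¹' {q})) := by
    ext (_ | _) <;> simp [dualCayleyGraph, cayInc]
  rw [Nat.card_coe_set_eq, hnbr, Set.ncard_image_of_injective _ Sum.inl_injective,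
    QuotientGroup.ncard_image_mk_preimage_mk_singleton (inf_comm (zpowers a) _ ▸ hint),
    Nat.card_zpowers]

end Cayley

theorem dualCayleyGraph_cubic_bipartite_girth_general {G : Type*} [Group G] [Fintype G]
    (a b : G) (ha : orderOf a = 3) (hb : orderOf b = 3)
    (hint : Subgroup.zpowers a ⊓ Subgroup.zpowers b = ⊥) :
    (∀ x, Nat.card ((dualCayleyGraph G a b).neighborSet x) = 3) ∧
    (∀ x y, (dualCayleyGraph G a b).Adj x y → x.isLeft ≠ y.isLeft) ∧
    3 * Nat.card ((G ⧸ Subgroup.zpowers a) ⊕ (G ⧸ Subgroup.zpowers b))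
      = 2 * Nat.card G ∧
    (dualCayleyGraph G a b).egirth = hypergraphGirth (cayInc G a b) := by
  refine ⟨?_, fun x y h => h.2, ?_, ?_⟩
  · rintro (p | q)
    · rw [card_neighborSet_dualCayleyGraph_inl hint, ha]
    · rw [card_neighborSet_dualCayleyGraph_inr hint, hb]
  · have hA := card_eq_card_quotient_mul_card_subgroup (zpowers a)
    have hB := card_eq_card_quotient_mul_card_subgroup (zpowers b)
    rw [Nat.card_zpowers, ha] at hA
    rw [Nat.card_zpowers, hb] at hB
    rw [Nat.card_sum]
    omega
  · rw [dualCayleyGraph_eq_dualGraph]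
    exact egirth_dualGraph maxDegreeLeTwo_cayInc (isLinearHypergraph_cayInc hint)

/-- If `G` is a finite group generated by `a, b` of order 3 with `⟨a⟩ ∩ ⟨b⟩ = 1`,
then the dual of `H = 3-Cay(G,{a,b})` is a 3-regular bipartite simple graph on
`(2/3)|G|` vertices (vertices the left cosets of `⟨a⟩` and `⟨b⟩`, adjacent iff
they intersect, bipartition classes the `⟨a⟩`-cosets and the `⟨b⟩`-cosets), whose
girth equals the girth of `H`. -/
theorem dualCayleyGraph_cubic_bipartite_girth {G : Type*} [Group G] [Fintype G]
    (a b : G) (ha : orderOf a = 3) (hb : orderOf b = 3)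
    (hgen : Subgroup.closure {a, b} = ⊤)
    (hint : Subgroup.zpowers a ⊓ Subgroup.zpowers b = ⊥) :
    (∀ x, Nat.card ((dualCayleyGraph G a b).neighborSet x) = 3) ∧
    (∀ x y, (dualCayleyGraph G a b).Adj x y → x.isLeft ≠ y.isLeft) ∧
    3 * Nat.card ((G ⧸ Subgroup.zpowers a) ⊕ (G ⧸ Subgroup.zpowers b))
      = 2 * Nat.card G ∧
    (dualCayleyGraph G a b).egirth = hypergraphGirth (cayInc G a b) :=
  dualCayleyGraph_cubic_bipartite_girth_general a b ha hb hint
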